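/- arXiv:1402.7364 — 2 statements merged into one kernel-verified Lean document; each statement's English description precedes it below -/
import Mathlib

section
/- If a triangulated category T admits a semi-orthogonal decomposition T = ⟨T₁, T₂⟩ and T is regular (has a strong generator), then both T₁ and T₂ are regular. -/
/-!
Statement 2: If a triangulated category `T` admits a semi-orthogonal decomposition
`T = ⟨T₁, T₂⟩` and `T` is regular (has a strong generator), then both `T₁` and `T₂`
are regular.

`genIdx X d` denotes `⟨X⟩_{d+1}`, built from `X` by `d` cone-taking steps, closing
at each step under shifts, finite direct sums and direct summands; `X` is a strong
generator of a class `S` if `genIdx X d = S` for some `d`.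
-/

open CategoryTheory Limits Pretriangulated

universe v u

section

variable {C : Type u} [Category.{v} C] [HasZeroObject C] [Preadditive C]
  [HasShift C ℤ] [∀ n : ℤ, (shiftFunctor C n).Additive] [Pretriangulated C]
  [HasBinaryBiproducts C]

/-- The envelope `⟨I⟩`: closure under shifts, finite direct sums and direct summands. -/
inductive envelope (I : Set C) : C → Prop
  | of {X : C} : X ∈ I → envelope I X
  | shift {X : C} (n : ℤ) : envelope I X → envelope I (X⟦n⟧)
  | sum {X Y : C} : envelope I X → envelope I Y → envelope I (X ⊞ Y)
  | summand {X Z : C} (s : X ⟶ Z) (r : Z ⟶ X) :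
      s ≫ r = 𝟙 X → envelope I Z → envelope I X

/-- `I₁ * I₂`: objects fitting into a distinguished triangle with outer terms in `I₁`, `I₂`. -/
def starProd (I₁ I₂ : Set C) : Set C :=
  {Y | ∃ (Y₁ Y₂ : C) (_ : Y₁ ∈ I₁) (_ : Y₂ ∈ I₂) (f : Y₁ ⟶ Y) (g : Y ⟶ Y₂)
    (h : Y₂ ⟶ Y₁⟦(1 : ℤ)⟧), Triangle.mk f g h ∈ distTriang C}

/-- `I₁ ◇ I₂ = ⟨I₁ * I₂⟩`. -/
def diamond (I₁ I₂ : Set C) : Set C := {X | envelope (starProd I₁ I₂) X}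

/-- `genIdx X d = ⟨X⟩_{d+1}`. -/
def genIdx (X : C) : ℕ → Set C
  | 0 => {Y | envelope {X} Y}
  | d + 1 => diamond (genIdx X d) {Y | envelope {X} Y}

/-- Semi-orthogonal decomposition `T = ⟨T₁, T₂⟩`. -/
structure SemiorthogonalDecomposition (C : Type u) [Category.{v} C] [HasZeroObject C]
    [Preadditive C] [HasShift C ℤ] [∀ n : ℤ, (shiftFunctor C n).Additive]
    [Pretriangulated C] where
  T₁ : Set C
  T₂ : Set C
  isoClosed₁ : ∀ {X Y : C}, (X ≅ Y) → X ∈ T₁ → Y ∈ T₁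
  isoClosed₂ : ∀ {X Y : C}, (X ≅ Y) → X ∈ T₂ → Y ∈ T₂
  shiftClosed₁ : ∀ (X : C) (n : ℤ), X ∈ T₁ → X⟦n⟧ ∈ T₁
  shiftClosed₂ : ∀ (X : C) (n : ℤ), X ∈ T₂ → X⟦n⟧ ∈ T₂
  extClosed₁ : ∀ (T : Triangle C), T ∈ (distTriang C) →
    T.obj₁ ∈ T₁ → T.obj₃ ∈ T₁ → T.obj₂ ∈ T₁
  extClosed₂ : ∀ (T : Triangle C), T ∈ (distTriang C) →
    T.obj₁ ∈ T₂ → T.obj₃ ∈ T₂ → T.obj₂ ∈ T₂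
  homZero : ∀ {X Y : C}, X ∈ T₁ → Y ∈ T₂ → ∀ f : Y ⟶ X, f = 0
  decomp : ∀ Z : C, ∃ (X Y : C) (_ : X ∈ T₁) (_ : Y ∈ T₂) (f : Y ⟶ Z) (g : Z ⟶ X)
    (h : X ⟶ Y⟦(1 : ℤ)⟧), Triangle.mk f g h ∈ distTriang C

end

/-!
The decomposition triangle `Y ⟶ Z ⟶ X ⟶ Y⟦1⟧` makes `Z ⟶ X` a `T₁`-local morphism
(precomposition with it is bijective on morphisms into `T₁`): a reflection of `Z` into `T₁`,
unique up to isomorphism. Reflections are compatible with shifts, finite sums and retracts, and,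
by the five lemma for the long exact `Hom(-, W)`-sequences, with distinguished triangles: if
`A ⟶ Z ⟶ B ⟶ A⟦1⟧` is distinguished, the cone of a lift `X_A ⟶ X_Z` is a reflection of `B`.
Hence reflecting `⟨G⟩ₙ` lands in `⟨X_G⟩ₙ`, and since an object of `T₁` is its own reflection,
`⟨X_G⟩ₙ = T₁`. Dually, `Y ⟶ Z` is `T₂`-colocal and `⟨Y_G⟩ₙ = T₂`.
-/

namespace CategoryTheory.Pretriangulated

open Preadditive

variable {C : Type u} [Category.{v} C] [HasZeroObject C] [Preadditive C]
  [HasShift C ℤ] [∀ n : ℤ, (shiftFunctor C n).Additive] [Pretriangulated C]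
  {T T' : Triangle C} {W : C}

lemma surjective_precomp_hom₃ (φ : T ⟶ T') (hT : T ∈ distTriang C) (hT' : T' ∈ distTriang C)
    (h₁ : Function.Injective fun m : T'.obj₁ ⟶ W ↦ φ.hom₁ ≫ m)
    (h₂ : Function.Surjective fun m : T'.obj₂ ⟶ W ↦ φ.hom₂ ≫ m)
    (h₁' : Function.Surjective fun m : T'.obj₁⟦(1 : ℤ)⟧ ⟶ W ↦ φ.hom₁⟦(1 : ℤ)⟧' ≫ m) :
    Function.Surjective fun m : T'.obj₃ ⟶ W ↦ φ.hom₃ ≫ m := by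
  intro m
  obtain ⟨m₂, hm₂ : φ.hom₂ ≫ m₂ = T.mor₂ ≫ m⟩ := h₂ (T.mor₂ ≫ m)
  obtain ⟨u, rfl⟩ := Triangle.yoneda_exact₂ _ hT' m₂ (h₁ (by
    simp only [← φ.comm₁_assoc, hm₂, comp_distTriang_mor_zero₁₂_assoc _ hT, zero_comp, comp_zero]))
  obtain ⟨ρ, hρ⟩ := Triangle.yoneda_exact₃ _ hT (m - φ.hom₃ ≫ u) (by
    rw [comp_sub, φ.comm₂_assoc, hm₂, sub_self])
  obtain ⟨ρ', hρ' : φ.hom₁⟦(1 : ℤ)⟧' ≫ ρ' = ρ⟩ := h₁' ρ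
  refine ⟨u + T'.mor₃ ≫ ρ', ?_⟩
  dsimp only
  rw [comp_add, ← φ.comm₃_assoc, hρ', ← hρ, add_sub_cancel]

lemma injective_precomp_hom₃ (φ : T ⟶ T') (hT : T ∈ distTriang C) (hT' : T' ∈ distTriang C)
    (h₂ : Function.Injective fun m : T'.obj₂ ⟶ W ↦ φ.hom₂ ≫ m)
    (h₁' : Function.Injective fun m : T'.obj₁⟦(1 : ℤ)⟧ ⟶ W ↦ φ.hom₁⟦(1 : ℤ)⟧' ≫ m)
    (h₂' : Function.Surjective fun m : T'.obj₂⟦(1 : ℤ)⟧ ⟶ W ↦ φ.hom₂⟦(1 : ℤ)⟧' ≫ m) :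
    Function.Injective fun m : T'.obj₃ ⟶ W ↦ φ.hom₃ ≫ m := by
  refine (injective_iff_map_eq_zero (leftComp W φ.hom₃)).2 fun u hu ↦ ?_
  change φ.hom₃ ≫ u = 0 at hu
  obtain ⟨v, rfl⟩ := Triangle.yoneda_exact₃ _ hT' u (h₂ (by
    simp only [← φ.comm₂_assoc, hu, comp_zero]))
  obtain ⟨w, hw⟩ := Triangle.yoneda_exact₃ _ (rot_of_distTriang _ hT) (φ.hom₁⟦(1 : ℤ)⟧' ≫ v)
    (by change T.mor₃ ≫ φ.hom₁⟦(1 : ℤ)⟧' ≫ v = 0; rw [φ.comm₃_assoc, hu])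
  change T.obj₂⟦(1 : ℤ)⟧ ⟶ W at w
  change φ.hom₁⟦(1 : ℤ)⟧' ≫ v = (-T.mor₁⟦(1 : ℤ)⟧') ≫ w at hw
  obtain ⟨w', hw' : φ.hom₂⟦(1 : ℤ)⟧' ≫ w' = -w⟩ := h₂' (-w)
  obtain rfl : v = T'.mor₁⟦(1 : ℤ)⟧' ≫ w' := h₁' (by
    change φ.hom₁⟦(1 : ℤ)⟧' ≫ v = φ.hom₁⟦(1 : ℤ)⟧' ≫ T'.mor₁⟦(1 : ℤ)⟧' ≫ w'
    rw [hw, ← Functor.map_comp_assoc, ← φ.comm₁, Functor.map_comp_assoc, hw', neg_comp,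
      comp_neg])
  rw [comp_distTriang_mor_zero₃₁_assoc _ hT', zero_comp]

lemma surjective_postcomp_hom₃ (φ : T ⟶ T') (hT : T ∈ distTriang C) (hT' : T' ∈ distTriang C)
    (h₂ : Function.Surjective fun m : W ⟶ T.obj₂ ↦ m ≫ φ.hom₂)
    (h₁' : Function.Surjective fun m : W ⟶ T.obj₁⟦(1 : ℤ)⟧ ↦ m ≫ φ.hom₁⟦(1 : ℤ)⟧')
    (h₂' : Function.Injective fun m : W ⟶ T.obj₂⟦(1 : ℤ)⟧ ↦ m ≫ φ.hom₂⟦(1 : ℤ)⟧') :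
    Function.Surjective fun m : W ⟶ T.obj₃ ↦ m ≫ φ.hom₃ := by
  intro m
  obtain ⟨n, hn : n ≫ φ.hom₁⟦(1 : ℤ)⟧' = m ≫ T'.mor₃⟩ := h₁' (m ≫ T'.mor₃)
  obtain ⟨u, rfl⟩ := Triangle.coyoneda_exact₁ _ hT n (h₂' (by
    change (n ≫ T.mor₁⟦(1 : ℤ)⟧') ≫ φ.hom₂⟦(1 : ℤ)⟧' = 0 ≫ φ.hom₂⟦(1 : ℤ)⟧'
    rw [Category.assoc, ← Functor.map_comp, φ.comm₁, Functor.map_comp, reassoc_of% hn,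
      comp_distTriang_mor_zero₃₁ _ hT', comp_zero, zero_comp]))
  obtain ⟨ρ, hρ⟩ := Triangle.coyoneda_exact₃ _ hT' (m - u ≫ φ.hom₃) (by
    rw [sub_comp, Category.assoc, ← φ.comm₃, ← hn, Category.assoc, sub_self])
  obtain ⟨ρ', hρ' : ρ' ≫ φ.hom₂ = ρ⟩ := h₂ ρ
  refine ⟨u + ρ' ≫ T.mor₂, ?_⟩
  dsimp only
  rw [add_comp, Category.assoc, φ.comm₂, reassoc_of% hρ', ← hρ, add_sub_cancel]

lemma injective_postcomp_hom₃ (φ : T ⟶ T') (hT : T ∈ distTriang C) (hT' : T' ∈ distTriang C)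
    (h₁ : Function.Surjective fun m : W ⟶ T.obj₁ ↦ m ≫ φ.hom₁)
    (h₂ : Function.Injective fun m : W ⟶ T.obj₂ ↦ m ≫ φ.hom₂)
    (h₁' : Function.Injective fun m : W ⟶ T.obj₁⟦(1 : ℤ)⟧ ↦ m ≫ φ.hom₁⟦(1 : ℤ)⟧') :
    Function.Injective fun m : W ⟶ T.obj₃ ↦ m ≫ φ.hom₃ := by
  refine (injective_iff_map_eq_zero (rightComp W φ.hom₃)).2 fun u hu ↦ ?_
  change u ≫ φ.hom₃ = 0 at hu
  obtain ⟨v, rfl⟩ := Triangle.coyoneda_exact₃ _ hT u (h₁' (by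
    change (u ≫ T.mor₃) ≫ φ.hom₁⟦(1 : ℤ)⟧' = 0 ≫ φ.hom₁⟦(1 : ℤ)⟧'
    rw [Category.assoc, φ.comm₃, reassoc_of% hu, zero_comp, zero_comp]))
  obtain ⟨w, hw⟩ := Triangle.coyoneda_exact₂ _ hT' (v ≫ φ.hom₂) (by
    rw [Category.assoc, ← φ.comm₂, ← Category.assoc, hu])
  obtain ⟨w', hw' : w' ≫ φ.hom₁ = w⟩ := h₁ w
  obtain rfl : v = w' ≫ T.mor₁ := h₂ (by
    change v ≫ φ.hom₂ = (w' ≫ T.mor₁) ≫ φ.hom₂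
    rw [hw, Category.assoc, φ.comm₁, reassoc_of% hw'])
  rw [Category.assoc, comp_distTriang_mor_zero₁₂ _ hT, comp_zero]

end CategoryTheory.Pretriangulated

namespace CategoryTheory.ObjectProperty

section Category

variable {C : Type u} [Category.{v} C] {P : ObjectProperty C}

lemma isLocal.isIso_of_comp_eq_id {Z X : C} {g : Z ⟶ X} (hg : P.isLocal g) (hX : P X)
    {q : X ⟶ Z} (hq : g ≫ q = 𝟙 Z) : IsIso g :=
  ⟨q, hq, (hg X hX).1 (by simp [reassoc_of% hq])⟩

lemma isColocal.isIso_of_comp_eq_id {Y Z : C} {f : Y ⟶ Z} (hf : P.isColocal f) (hY : P Y)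
    {t : Z ⟶ Y} (ht : t ≫ f = 𝟙 Z) : IsIso f :=
  ⟨t, (hf Y hY).1 (by simp [ht]), ht⟩

lemma isLocal.nonempty_iso {Z X X' : C} {g : Z ⟶ X} {g' : Z ⟶ X'} (hg : P.isLocal g)
    (hg' : P.isLocal g') (hX : P X) (hX' : P X') : Nonempty (X ≅ X') := by
  obtain ⟨u, hu⟩ := (hg X' hX').2 g'
  have : IsIso u := (P.isLocal_iff_isIso u hX hX').1
    (P.isLocal.of_precomp g u hg (by rwa [← hu] at hg'))
  exact ⟨asIso u⟩

lemma isColocal.nonempty_iso {Z Y Y' : C} {f : Y ⟶ Z} {f' : Y' ⟶ Z} (hf : P.isColocal f)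
    (hf' : P.isColocal f') (hY : P Y) (hY' : P Y') : Nonempty (Y ≅ Y') := by
  obtain ⟨u, hu⟩ := (hf Y' hY').2 f'
  have : IsIso u := (P.isColocal_iff_isIso u hY' hY).1
    (P.isColocal.of_postcomp u f hf (by rwa [← hu] at hf'))
  exact ⟨(asIso u).symm⟩

lemma isLocal.exists_retract {Z Z' X X' : C} {g : Z ⟶ X} {g' : Z' ⟶ X'} (hg : P.isLocal g)
    (hg' : P.isLocal g') (hX : P X) (hX' : P X') (s : Z ⟶ Z') (r : Z' ⟶ Z)
    (hsr : s ≫ r = 𝟙 Z) : ∃ (s' : X ⟶ X') (r' : X' ⟶ X), s' ≫ r' = 𝟙 X := by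
  obtain ⟨s', hs'⟩ := (hg X' hX').2 (s ≫ g')
  obtain ⟨r', hr'⟩ := (hg' X hX).2 (r ≫ g)
  refine ⟨s', r', (hg X hX).1 ?_⟩
  simp only [reassoc_of% hs', hr', reassoc_of% hsr, Category.comp_id]

lemma isColocal.exists_retract {Z Z' Y Y' : C} {f : Y ⟶ Z} {f' : Y' ⟶ Z'}
    (hf : P.isColocal f) (hf' : P.isColocal f') (hY : P Y) (hY' : P Y') (s : Z ⟶ Z')
    (r : Z' ⟶ Z) (hsr : s ≫ r = 𝟙 Z) : ∃ (s' : Y ⟶ Y') (r' : Y' ⟶ Y), s' ≫ r' = 𝟙 Y := by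
  obtain ⟨s', hs'⟩ := (hf' Y hY).2 (f ≫ s)
  obtain ⟨r', hr'⟩ := (hf Y' hY').2 (f' ≫ r)
  refine ⟨s', r', (hf Y hY).1 ?_⟩
  simp only [Category.assoc, hr', reassoc_of% hs', hsr, Category.comp_id, Category.id_comp]

end Category

section Biproducts

variable {C : Type u} [Category.{v} C] [Preadditive C] [HasBinaryBiproducts C]
  {P : ObjectProperty C}

lemma isLocal.biprod_map {Z₁ Z₂ X₁ X₂ : C} {g₁ : Z₁ ⟶ X₁} {g₂ : Z₂ ⟶ X₂}
    (hg₁ : P.isLocal g₁) (hg₂ : P.isLocal g₂) : P.isLocal (biprod.map g₁ g₂) := by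
  intro W hW
  refine ⟨fun m m' h ↦ biprod.hom_ext' _ _ ((hg₁ W hW).1 ?_) ((hg₂ W hW).1 ?_), fun m ↦ ?_⟩
  · simpa using biprod.inl ≫= h
  · simpa using biprod.inr ≫= h
  · obtain ⟨a₁, h₁⟩ := (hg₁ W hW).2 (biprod.inl ≫ m)
    obtain ⟨a₂, h₂⟩ := (hg₂ W hW).2 (biprod.inr ≫ m)
    exact ⟨biprod.desc a₁ a₂, biprod.hom_ext' _ _ (by simpa using h₁) (by simpa using h₂)⟩

lemma isColocal.biprod_map {Y₁ Y₂ Z₁ Z₂ : C} {f₁ : Y₁ ⟶ Z₁} {f₂ : Y₂ ⟶ Z₂}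
    (hf₁ : P.isColocal f₁) (hf₂ : P.isColocal f₂) : P.isColocal (biprod.map f₁ f₂) := by
  intro W hW
  refine ⟨fun m m' h ↦ biprod.hom_ext _ _ ((hf₁ W hW).1 ?_) ((hf₂ W hW).1 ?_), fun m ↦ ?_⟩
  · simpa using h =≫ biprod.fst
  · simpa using h =≫ biprod.snd
  · obtain ⟨a₁, h₁⟩ := (hf₁ W hW).2 (m ≫ biprod.fst)
    obtain ⟨a₂, h₂⟩ := (hf₂ W hW).2 (m ≫ biprod.snd)
    exact ⟨biprod.lift a₁ a₂, biprod.hom_ext _ _ (by simpa using h₁) (by simpa using h₂)⟩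

end Biproducts

section Shift

variable {C : Type u} [Category.{v} C] [HasShift C ℤ] {P : ObjectProperty C}

lemma isLocal.shift (hP : ∀ (W : C) (n : ℤ), P W → P (W⟦n⟧)) {Z X : C} {g : Z ⟶ X}
    (hg : P.isLocal g) (n : ℤ) : P.isLocal (g⟦n⟧') := by
  intro W hW
  let adj := (shiftEquiv C n).toAdjunction
  have : (fun m : X⟦n⟧ ⟶ W ↦ g⟦n⟧' ≫ m) =
      (adj.homEquiv Z W).symm ∘ (fun m ↦ g ≫ m) ∘ adj.homEquiv X W :=
    funext fun m ↦ ((Equiv.symm_apply_eq _).2 (adj.homEquiv_naturality_left g m).symm).symm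
  rw [this]
  exact (adj.homEquiv Z W).symm.bijective.comp
    ((hg _ (hP W (-n) hW)).comp (adj.homEquiv X W).bijective)

lemma isColocal.shift (hP : ∀ (W : C) (n : ℤ), P W → P (W⟦n⟧)) {Y Z : C} {f : Y ⟶ Z}
    (hf : P.isColocal f) (n : ℤ) : P.isColocal (f⟦n⟧') := by
  intro W hW
  let adj := (shiftEquiv C n).symm.toAdjunction
  have : (fun m : W ⟶ Y⟦n⟧ ↦ m ≫ f⟦n⟧') =
      adj.homEquiv W Z ∘ (fun m ↦ m ≫ f) ∘ (adj.homEquiv W Y).symm :=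
    funext fun m ↦ by
      change _ = adj.homEquiv W Z ((adj.homEquiv W Y).symm m ≫ f)
      rw [adj.homEquiv_naturality_right]
      exact congrArg (· ≫ _) ((adj.homEquiv W Y).apply_symm_apply m).symm
  rw [this]
  exact (adj.homEquiv W Z).bijective.comp
    ((hf _ (hP W (-n) hW)).comp (adj.homEquiv W Y).symm.bijective)

end Shift

section Pretriangulated

variable {C : Type u} [Category.{v} C] [HasZeroObject C] [Preadditive C]
  [HasShift C ℤ] [∀ n : ℤ, (shiftFunctor C n).Additive] [Pretriangulated C]
  {P : ObjectProperty C} {T T' : Triangle C}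

lemma isLocal_hom₃ (hP : ∀ (W : C) (n : ℤ), P W → P (W⟦n⟧)) (φ : T ⟶ T')
    (hT : T ∈ distTriang C) (hT' : T' ∈ distTriang C) (h₁ : P.isLocal φ.hom₁)
    (h₂ : P.isLocal φ.hom₂) : P.isLocal φ.hom₃ := fun W hW ↦
  ⟨injective_precomp_hom₃ φ hT hT' (h₂ W hW).1 (h₁.shift hP 1 W hW).1 (h₂.shift hP 1 W hW).2,
    surjective_precomp_hom₃ φ hT hT' (h₁ W hW).1 (h₂ W hW).2 (h₁.shift hP 1 W hW).2⟩

lemma isColocal_hom₃ (hP : ∀ (W : C) (n : ℤ), P W → P (W⟦n⟧)) (φ : T ⟶ T')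
    (hT : T ∈ distTriang C) (hT' : T' ∈ distTriang C) (h₁ : P.isColocal φ.hom₁)
    (h₂ : P.isColocal φ.hom₂) : P.isColocal φ.hom₃ := fun W hW ↦
  ⟨injective_postcomp_hom₃ φ hT hT' (h₁ W hW).2 (h₂ W hW).1 (h₁.shift hP 1 W hW).1,
    surjective_postcomp_hom₃ φ hT hT' (h₂ W hW).2 (h₁.shift hP 1 W hW).2 (h₂.shift hP 1 W hW).1⟩

end Pretriangulated

end CategoryTheory.ObjectProperty

section Envelope

variable {C : Type u} [Category.{v} C] [HasZeroObject C] [Preadditive C]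
  [HasShift C ℤ] [∀ n : ℤ, (shiftFunctor C n).Additive] [Pretriangulated C]
  [HasBinaryBiproducts C]

lemma envelope_subset {I S : Set C} (hI : I ⊆ S)
    (hshift : ∀ (X : C) (n : ℤ), X ∈ S → X⟦n⟧ ∈ S)
    (hext : ∀ T ∈ distTriang C, T.obj₁ ∈ S → T.obj₃ ∈ S → T.obj₂ ∈ S)
    (hretract : ∀ {X Z : C} (s : X ⟶ Z) (r : Z ⟶ X), s ≫ r = 𝟙 X → Z ∈ S → X ∈ S)
    {Z : C} (hZ : envelope I Z) : Z ∈ S := by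
  induction hZ with
  | of h => exact hI h
  | shift n _ ih => exact hshift _ n ih
  | sum _ _ ih₁ ih₂ => exact hext _ (binaryBiproductTriangle_distinguished _ _) ih₁ ih₂
  | summand s r hsr _ ih => exact hretract s r hsr ih

lemma genIdx_subset {X : C} {S : Set C} (hX : X ∈ S)
    (hshift : ∀ (X : C) (n : ℤ), X ∈ S → X⟦n⟧ ∈ S)
    (hext : ∀ T ∈ distTriang C, T.obj₁ ∈ S → T.obj₃ ∈ S → T.obj₂ ∈ S)
    (hretract : ∀ {X Z : C} (s : X ⟶ Z) (r : Z ⟶ X), s ≫ r = 𝟙 X → Z ∈ S → X ∈ S) :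
    ∀ n : ℕ, genIdx X n ⊆ S := by
  have h₀ : genIdx X 0 ⊆ S := fun _ ↦
    envelope_subset (Set.singleton_subset_iff.2 hX) hshift hext hretract
  intro n
  induction n with
  | zero => exact h₀
  | succ n ih =>
    refine fun _ ↦ envelope_subset ?_ hshift hext hretract
    rintro _ ⟨_, _, h₁, h₃, _, _, _, hT⟩
    exact hext _ hT (ih h₁) (h₀ h₃)

lemma genIdx_of_retract {X Z Z' : C} {n : ℕ} (s : Z ⟶ Z') (r : Z' ⟶ Z) (hsr : s ≫ r = 𝟙 Z)
    (h : Z' ∈ genIdx X n) : Z ∈ genIdx X n := by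
  cases n <;> exact envelope.summand s r hsr h

end Envelope

namespace SemiorthogonalDecomposition

open ObjectProperty Preadditive

variable {C : Type u} [Category.{v} C] [HasZeroObject C] [Preadditive C]
  [HasShift C ℤ] [∀ n : ℤ, (shiftFunctor C n).Additive] [Pretriangulated C]
  (D : SemiorthogonalDecomposition C)

lemma exists_isLocal₁ (Z : C) : ∃ (X : C) (g : Z ⟶ X), X ∈ D.T₁ ∧ isLocal D.T₁ g := by
  obtain ⟨X, Y, hX, hY, f, g, h, hT⟩ := D.decomp Z
  refine ⟨X, g, hX, fun W hW ↦
    ⟨(injective_iff_map_eq_zero (leftComp W g)).2 fun m hm ↦ ?_, fun m ↦ ?_⟩⟩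
  · obtain ⟨w, rfl⟩ := Triangle.yoneda_exact₂ _ (rot_of_distTriang _ hT) m hm
    exact (D.homZero hW (D.shiftClosed₂ Y 1 hY) w).symm ▸ comp_zero
  · obtain ⟨m', rfl⟩ := Triangle.yoneda_exact₂ _ hT m (D.homZero hW hY _)
    exact ⟨m', rfl⟩

lemma exists_isColocal₂ (Z : C) : ∃ (Y : C) (f : Y ⟶ Z), Y ∈ D.T₂ ∧ isColocal D.T₂ f := by
  obtain ⟨X, Y, hX, hY, f, g, h, hT⟩ := D.decomp Z
  refine ⟨Y, f, hY, fun W hW ↦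
    ⟨(injective_iff_map_eq_zero (rightComp W f)).2 fun m hm ↦ ?_, fun m ↦ ?_⟩⟩
  · obtain ⟨w, rfl⟩ := Triangle.coyoneda_exact₂ _ (inv_rot_of_distTriang _ hT) m hm
    exact (D.homZero (D.shiftClosed₁ X (-1) hX) hW w).symm ▸ zero_comp
  · obtain ⟨m', rfl⟩ := Triangle.coyoneda_exact₂ _ hT m (D.homZero hX hW _)
    exact ⟨m', rfl⟩

lemma retract_mem₁ {Z Z' : C} (s : Z ⟶ Z') (r : Z' ⟶ Z) (hsr : s ≫ r = 𝟙 Z)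
    (hZ' : Z' ∈ D.T₁) : Z ∈ D.T₁ := by
  obtain ⟨X, g, hX, hg⟩ := D.exists_isLocal₁ Z
  obtain ⟨s', hs' : g ≫ s' = s⟩ := (hg Z' hZ').2 s
  have := hg.isIso_of_comp_eq_id hX (q := s' ≫ r) (by rw [reassoc_of% hs', hsr])
  exact D.isoClosed₁ (asIso g).symm hX

lemma retract_mem₂ {Z Z' : C} (s : Z ⟶ Z') (r : Z' ⟶ Z) (hsr : s ≫ r = 𝟙 Z)
    (hZ' : Z' ∈ D.T₂) : Z ∈ D.T₂ := by
  obtain ⟨Y, f, hY, hf⟩ := D.exists_isColocal₂ Z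
  obtain ⟨r', hr' : r' ≫ f = r⟩ := (hf Z' hZ').2 r
  have := hf.isIso_of_comp_eq_id hY (t := s ≫ r') (by rw [Category.assoc, hr', hsr])
  exact D.isoClosed₂ (asIso f) hY

def HasReflectionIn₁ (S : Set C) (Z : C) : Prop :=
  ∃ (X : C) (g : Z ⟶ X), X ∈ D.T₁ ∧ X ∈ S ∧ isLocal D.T₁ g

def HasCoreflectionIn₂ (S : Set C) (Z : C) : Prop :=
  ∃ (Y : C) (f : Y ⟶ Z), Y ∈ D.T₂ ∧ Y ∈ S ∧ isColocal D.T₂ f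

variable {D}

lemma HasReflectionIn₁.mono {S S' : Set C} {Z : C} (h : D.HasReflectionIn₁ S Z)
    (hSS' : S ⊆ S') : D.HasReflectionIn₁ S' Z :=
  let ⟨X, g, hX, hXS, hg⟩ := h
  ⟨X, g, hX, hSS' hXS, hg⟩

lemma HasCoreflectionIn₂.mono {S S' : Set C} {Z : C} (h : D.HasCoreflectionIn₂ S Z)
    (hSS' : S ⊆ S') : D.HasCoreflectionIn₂ S' Z :=
  let ⟨Y, f, hY, hYS, hf⟩ := h
  ⟨Y, f, hY, hSS' hYS, hf⟩

lemma HasReflectionIn₁.of_distTriang {S₁ S₂ : Set C}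
    (hS₂ : ∀ {X Y : C}, (X ≅ Y) → X ∈ S₂ → Y ∈ S₂) {T : Triangle C} (hT : T ∈ distTriang C)
    (h₁ : D.HasReflectionIn₁ S₁ T.obj₁) (h₃ : D.HasReflectionIn₁ S₂ T.obj₃) :
    D.HasReflectionIn₁ (starProd S₁ S₂) T.obj₂ := by
  obtain ⟨X₁, g₁, hX₁, hX₁S, hg₁⟩ := h₁
  obtain ⟨X₃, g₃, hX₃, hX₃S, hg₃⟩ := h₃
  obtain ⟨X₂, g₂, hX₂, hg₂⟩ := D.exists_isLocal₁ T.obj₂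
  obtain ⟨α, hα⟩ := (hg₁ X₂ hX₂).2 (T.mor₁ ≫ g₂)
  obtain ⟨Q, β, γ, hT'⟩ := distinguished_cocone_triangle α
  have hQ : Q ∈ D.T₁ := D.extClosed₁ _ (rot_of_distTriang _ hT') hX₂ (D.shiftClosed₁ _ 1 hX₁)
  let φ : T ⟶ Triangle.mk α β γ :=
    completeDistinguishedTriangleMorphism T _ hT hT' g₁ g₂ hα.symm
  obtain ⟨e⟩ := hg₃.nonempty_iso (isLocal_hom₃ D.shiftClosed₁ φ hT hT' hg₁ hg₂) hX₃ hQ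
  exact ⟨X₂, g₂, hX₂, ⟨X₁, Q, hX₁S, hS₂ e hX₃S, α, β, γ, hT'⟩, hg₂⟩

lemma HasCoreflectionIn₂.of_distTriang {S₁ S₂ : Set C}
    (hS₂ : ∀ {X Y : C}, (X ≅ Y) → X ∈ S₂ → Y ∈ S₂) {T : Triangle C} (hT : T ∈ distTriang C)
    (h₁ : D.HasCoreflectionIn₂ S₁ T.obj₁) (h₃ : D.HasCoreflectionIn₂ S₂ T.obj₃) :
    D.HasCoreflectionIn₂ (starProd S₁ S₂) T.obj₂ := by
  obtain ⟨Y₁, f₁, hY₁, hY₁S, hf₁⟩ := h₁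
  obtain ⟨Y₃, f₃, hY₃, hY₃S, hf₃⟩ := h₃
  obtain ⟨Y₂, f₂, hY₂, hf₂⟩ := D.exists_isColocal₂ T.obj₂
  obtain ⟨l, hl⟩ := (hf₂ Y₁ hY₁).2 (f₁ ≫ T.mor₁)
  obtain ⟨R, μ, ν, hT'⟩ := distinguished_cocone_triangle l
  have hR : R ∈ D.T₂ := D.extClosed₂ _ (rot_of_distTriang _ hT') hY₂ (D.shiftClosed₂ _ 1 hY₁)
  let φ : Triangle.mk l μ ν ⟶ T :=
    completeDistinguishedTriangleMorphism _ T hT' hT f₁ f₂ hl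
  obtain ⟨e⟩ := hf₃.nonempty_iso (isColocal_hom₃ D.shiftClosed₂ φ hT' hT hf₁ hf₂) hY₃ hR
  exact ⟨Y₂, f₂, hY₂, ⟨Y₁, R, hY₁S, hS₂ e hY₃S, l, μ, ν, hT'⟩, hf₂⟩

variable [HasBinaryBiproducts C]

lemma HasReflectionIn₁.envelope {I J : Set C}
    (hI : ∀ Z ∈ I, D.HasReflectionIn₁ {X | envelope J X} Z) {Z : C} (hZ : envelope I Z) :
    D.HasReflectionIn₁ {X | envelope J X} Z := by
  induction hZ with
  | of h => exact hI _ h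
  | shift n _ ih =>
    obtain ⟨X, g, hX, hXJ, hg⟩ := ih
    exact ⟨X⟦n⟧, g⟦n⟧', D.shiftClosed₁ X n hX, envelope.shift n hXJ, hg.shift D.shiftClosed₁ n⟩
  | sum _ _ ih₁ ih₂ =>
    obtain ⟨X₁, g₁, hX₁, hX₁J, hg₁⟩ := ih₁
    obtain ⟨X₂, g₂, hX₂, hX₂J, hg₂⟩ := ih₂
    exact ⟨X₁ ⊞ X₂, biprod.map g₁ g₂,
      D.extClosed₁ _ (binaryBiproductTriangle_distinguished _ _) hX₁ hX₂,
      envelope.sum hX₁J hX₂J, hg₁.biprod_map hg₂⟩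
  | @summand Z Z' s r hsr _ ih =>
    obtain ⟨X', g', hX', hX'J, hg'⟩ := ih
    obtain ⟨X, g, hX, hg⟩ := D.exists_isLocal₁ Z
    obtain ⟨s', r', hsr'⟩ := hg.exists_retract hg' hX hX' s r hsr
    exact ⟨X, g, hX, envelope.summand s' r' hsr' hX'J, hg⟩

lemma HasCoreflectionIn₂.envelope {I J : Set C}
    (hI : ∀ Z ∈ I, D.HasCoreflectionIn₂ {Y | envelope J Y} Z) {Z : C} (hZ : envelope I Z) :
    D.HasCoreflectionIn₂ {Y | envelope J Y} Z := by
  induction hZ with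
  | of h => exact hI _ h
  | shift n _ ih =>
    obtain ⟨Y, f, hY, hYJ, hf⟩ := ih
    exact ⟨Y⟦n⟧, f⟦n⟧', D.shiftClosed₂ Y n hY, envelope.shift n hYJ, hf.shift D.shiftClosed₂ n⟩
  | sum _ _ ih₁ ih₂ =>
    obtain ⟨Y₁, f₁, hY₁, hY₁J, hf₁⟩ := ih₁
    obtain ⟨Y₂, f₂, hY₂, hY₂J, hf₂⟩ := ih₂
    exact ⟨Y₁ ⊞ Y₂, biprod.map f₁ f₂,
      D.extClosed₂ _ (binaryBiproductTriangle_distinguished _ _) hY₁ hY₂,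
      envelope.sum hY₁J hY₂J, hf₁.biprod_map hf₂⟩
  | @summand Z Z' s r hsr _ ih =>
    obtain ⟨Y', f', hY', hY'J, hf'⟩ := ih
    obtain ⟨Y, f, hY, hf⟩ := D.exists_isColocal₂ Z
    obtain ⟨s', r', hsr'⟩ := hf.exists_retract hf' hY hY' s r hsr
    exact ⟨Y, f, hY, envelope.summand s' r' hsr' hY'J, hf⟩

lemma hasReflectionIn₁_genIdx {G X : C} {g : G ⟶ X} (hX : X ∈ D.T₁) (hg : isLocal D.T₁ g) :
    ∀ (n : ℕ), ∀ Z ∈ genIdx G n, D.HasReflectionIn₁ (genIdx X n) Z := by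
  have h₀ : ∀ Z ∈ genIdx G 0, D.HasReflectionIn₁ (genIdx X 0) Z := fun _ ↦
    HasReflectionIn₁.envelope (by rintro _ rfl; exact ⟨X, g, hX, envelope.of rfl, hg⟩)
  intro n
  induction n with
  | zero => exact h₀
  | succ n ih =>
    refine fun _ ↦ HasReflectionIn₁.envelope ?_
    rintro _ ⟨_, _, h₁, h₃, _, _, _, hT⟩
    refine (HasReflectionIn₁.of_distTriang ?_ hT (ih _ h₁) (h₀ _ h₃)).mono fun _ ↦ envelope.of
    exact fun e ↦ genIdx_of_retract e.inv e.hom e.inv_hom_id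

lemma hasCoreflectionIn₂_genIdx {G Y : C} {f : Y ⟶ G} (hY : Y ∈ D.T₂)
    (hf : isColocal D.T₂ f) :
    ∀ (n : ℕ), ∀ Z ∈ genIdx G n, D.HasCoreflectionIn₂ (genIdx Y n) Z := by
  have h₀ : ∀ Z ∈ genIdx G 0, D.HasCoreflectionIn₂ (genIdx Y 0) Z := fun _ ↦
    HasCoreflectionIn₂.envelope (by rintro _ rfl; exact ⟨Y, f, hY, envelope.of rfl, hf⟩)
  intro n
  induction n with
  | zero => exact h₀
  | succ n ih =>
    refine fun _ ↦ HasCoreflectionIn₂.envelope ?_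
    rintro _ ⟨_, _, h₁, h₃, _, _, _, hT⟩
    refine (HasCoreflectionIn₂.of_distTriang ?_ hT (ih _ h₁) (h₀ _ h₃)).mono fun _ ↦ envelope.of
    exact fun e ↦ genIdx_of_retract e.inv e.hom e.inv_hom_id

variable (D)

lemma exists_genIdx_eq_T₁ (hreg : ∃ (G : C) (n : ℕ), genIdx G n = Set.univ) :
    ∃ (G₁ : C) (n₁ : ℕ), genIdx G₁ n₁ = D.T₁ := by
  obtain ⟨G, n, hG⟩ := hreg
  obtain ⟨X, g, hX, hg⟩ := D.exists_isLocal₁ G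
  refine ⟨X, n, (genIdx_subset hX D.shiftClosed₁ D.extClosed₁ D.retract_mem₁ n).antisymm
    fun Z hZ ↦ ?_⟩
  obtain ⟨X', g', hX', hX'n, hg'⟩ := hasReflectionIn₁_genIdx hX hg n Z (hG ▸ Set.mem_univ Z)
  have : IsIso g' := (isLocal_iff_isIso _ g' hZ hX').1 hg'
  exact genIdx_of_retract g' (inv g') (IsIso.hom_inv_id g') hX'n

lemma exists_genIdx_eq_T₂ (hreg : ∃ (G : C) (n : ℕ), genIdx G n = Set.univ) :
    ∃ (G₂ : C) (n₂ : ℕ), genIdx G₂ n₂ = D.T₂ := by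
  obtain ⟨G, n, hG⟩ := hreg
  obtain ⟨Y, f, hY, hf⟩ := D.exists_isColocal₂ G
  refine ⟨Y, n, (genIdx_subset hY D.shiftClosed₂ D.extClosed₂ D.retract_mem₂ n).antisymm
    fun Z hZ ↦ ?_⟩
  obtain ⟨Y', f', hY', hY'n, hf'⟩ := hasCoreflectionIn₂_genIdx hY hf n Z (hG ▸ Set.mem_univ Z)
  have : IsIso f' := (isColocal_iff_isIso _ f' hY' hZ).1 hf'
  exact genIdx_of_retract (inv f') f' (IsIso.inv_hom_id f') hY'n

end SemiorthogonalDecomposition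

theorem regular_summands_of_semiorthogonal_decomposition
    (C : Type u) [Category.{v} C] [HasZeroObject C] [Preadditive C]
    [HasShift C ℤ] [∀ n : ℤ, (shiftFunctor C n).Additive] [Pretriangulated C]
    [HasBinaryBiproducts C]
    (D : SemiorthogonalDecomposition C)
    -- `T` is regular: it has a strong generator
    (hreg : ∃ (G : C) (n : ℕ), genIdx G n = (Set.univ : Set C)) :
    -- then `T₁` and `T₂` are regular
    (∃ (G₁ : C) (n₁ : ℕ), genIdx G₁ n₁ = D.T₁) ∧
    (∃ (G₂ : C) (n₂ : ℕ), genIdx G₂ n₂ = D.T₂) :=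
  ⟨D.exists_genIdx_eq_T₁ hreg, D.exists_genIdx_eq_T₂ hreg⟩
end

section
/- Let T be a regular and proper idempotent complete k-linear triangulated category, and let T be a full triangulated subcategory of a proper k-linear triangulated category T'. Then T is admissible in T', that is, the inclusion functor T ↪ T' admits both a right adjoint and a left adjoint. -/
/-!
Write `P = genIdx G n` for a strong generator `G`. For every `X'` we build `ψ : X ⟶ X'` with
`X ∈ P` such that `Hom(A, ψ)` is onto for all `A ∈ genIdx G d`, by induction on `d`. Properness
makes the maps `G⟦m⟧ ⟶ X'` span a finite-dimensional space, so a single map from the envelope of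
`G` covers them all. Composing `ψ` with the cone `u` of such a map kills the kernel of `Hom(A, ψ)`
on shifts of `G`, and a diagram chase along a distinguished triangle carries surjectivity and this
killing property from `S₁` and `S₂` to `S₁ * S₂`. At the top level, a lift of the improved
approximation back along `ψ` turns `u` into an idempotent, whose image, split inside `P`,
represents `Hom(-, X')` on `P`: this is a right adjoint to the inclusion. The left adjoint is dual.
-/

open CategoryTheory Limits Pretriangulated DirectSum

universe v u w

section Approximations

variable {C : Type u} [Category.{v} C]

def PostcompSurjOn (S : Set C) {X X' : C} (ψ : X ⟶ X') : Prop :=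
  ∀ ⦃A : C⦄, A ∈ S → ∀ g : A ⟶ X', ∃ f : A ⟶ X, f ≫ ψ = g

def PrecompSurjOn (S : Set C) {X' X : C} (ψ : X' ⟶ X) : Prop :=
  ∀ ⦃A : C⦄, A ∈ S → ∀ g : X' ⟶ A, ∃ f : X ⟶ A, ψ ≫ f = g

def IdempotentsSplitIn (P : Set C) : Prop :=
  ∀ X ∈ P, ∀ e : X ⟶ X, e ≫ e = e →
    ∃ (Y : C) (_ : Y ∈ P) (p : X ⟶ Y) (i : Y ⟶ X), i ≫ p = 𝟙 Y ∧ p ≫ i = e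

variable {S S' P : Set C}

lemma PostcompSurjOn.mono {X X' : C} {ψ : X ⟶ X'} (h : PostcompSurjOn S' ψ) (hS : S ⊆ S') :
    PostcompSurjOn S ψ :=
  fun _ hA => h (hS hA)

lemma PrecompSurjOn.mono {X' X : C} {ψ : X' ⟶ X} (h : PrecompSurjOn S' ψ) (hS : S ⊆ S') :
    PrecompSurjOn S ψ :=
  fun _ hA => h (hS hA)

lemma PostcompSurjOn.of_fac {X X' X₂ : C} {ψ : X ⟶ X'} {u : X ⟶ X₂} {ψ₂ : X₂ ⟶ X'}
    (hc : u ≫ ψ₂ = ψ) (h : PostcompSurjOn S ψ) : PostcompSurjOn S ψ₂ := by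
  intro A hA g
  obtain ⟨f, rfl⟩ := h hA g
  exact ⟨f ≫ u, by rw [Category.assoc, hc]⟩

lemma PrecompSurjOn.of_fac {X' X X₂ : C} {ψ : X' ⟶ X} {u : X₂ ⟶ X} {ψ₂ : X' ⟶ X₂}
    (hc : ψ₂ ≫ u = ψ) (h : PrecompSurjOn S ψ) : PrecompSurjOn S ψ₂ := by
  intro A hA g
  obtain ⟨f, rfl⟩ := h hA g
  exact ⟨u ≫ f, by rw [← Category.assoc, hc]⟩

variable [Preadditive C]

def PostcompKillsOn (S : Set C) {X X' X₂ : C} (ψ : X ⟶ X') (u : X ⟶ X₂) : Prop :=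
  ∀ ⦃A : C⦄, A ∈ S → ∀ f : A ⟶ X, f ≫ ψ = 0 → f ≫ u = 0

def PrecompKillsOn (S : Set C) {X' X X₂ : C} (ψ : X' ⟶ X) (u : X₂ ⟶ X) : Prop :=
  ∀ ⦃A : C⦄, A ∈ S → ∀ f : X ⟶ A, ψ ≫ f = 0 → u ≫ f = 0

lemma PostcompKillsOn.mono {X X' X₂ : C} {ψ : X ⟶ X'} {u : X ⟶ X₂} (h : PostcompKillsOn S' ψ u)
    (hS : S ⊆ S') : PostcompKillsOn S ψ u :=
  fun _ hA => h (hS hA)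

lemma PrecompKillsOn.mono {X' X X₂ : C} {ψ : X' ⟶ X} {u : X₂ ⟶ X} (h : PrecompKillsOn S' ψ u)
    (hS : S ⊆ S') : PrecompKillsOn S ψ u :=
  fun _ hA => h (hS hA)

lemma exists_postcomp_bijective_of_idempotent (hidem : IdempotentsSplitIn P) {X X' : C}
    (hX : X ∈ P) {ψ : X ⟶ X'} (hψ : PostcompSurjOn P ψ) {e : X ⟶ X} (hee : e ≫ e = e)
    (heψ : e ≫ ψ = ψ) (hker : PostcompKillsOn P ψ e) :
    ∃ Y ∈ P, ∃ ε : Y ⟶ X', ∀ A ∈ P, Function.Bijective fun f : A ⟶ Y => f ≫ ε := by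
  obtain ⟨Y, hY, p, i, hip, rfl⟩ := hidem X hX e hee
  refine ⟨Y, hY, i ≫ ψ, fun A hA => ⟨fun f₁ f₂ h => ?_, fun g => ?_⟩⟩
  · have hd : ((f₁ - f₂) ≫ i) ≫ ψ = 0 := by
      simp only [Preadditive.sub_comp, Category.assoc]
      exact sub_eq_zero.2 h
    have hi : (f₁ - f₂) ≫ i = 0 := by
      simpa [reassoc_of% hip] using hker hA _ hd
    rw [← sub_eq_zero, ← Category.comp_id (f₁ - f₂), ← hip, ← Category.assoc, hi, zero_comp]
  · obtain ⟨f, rfl⟩ := hψ hA g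
    exact ⟨f ≫ p, by simpa using congrArg (f ≫ ·) heψ⟩

lemma exists_precomp_bijective_of_idempotent (hidem : IdempotentsSplitIn P) {X' X : C}
    (hX : X ∈ P) {ψ : X' ⟶ X} (hψ : PrecompSurjOn P ψ) {e : X ⟶ X} (hee : e ≫ e = e)
    (hψe : ψ ≫ e = ψ) (hker : PrecompKillsOn P ψ e) :
    ∃ Y ∈ P, ∃ η : X' ⟶ Y, ∀ A ∈ P, Function.Bijective fun f : Y ⟶ A => η ≫ f := by
  obtain ⟨Y, hY, p, i, hip, rfl⟩ := hidem X hX e hee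
  refine ⟨Y, hY, ψ ≫ p, fun A hA => ⟨fun f₁ f₂ h => ?_, fun g => ?_⟩⟩
  · have hd : ψ ≫ p ≫ (f₁ - f₂) = 0 := by
      simp only [Preadditive.comp_sub]
      exact sub_eq_zero.2 (by simpa using h)
    have hp : p ≫ (f₁ - f₂) = 0 := by
      simpa only [Category.assoc, reassoc_of% hip] using hker hA _ hd
    rw [← sub_eq_zero, ← Category.id_comp (f₁ - f₂), ← hip, Category.assoc, hp, comp_zero]
  · obtain ⟨f, rfl⟩ := hψ hA g
    exact ⟨i ≫ f, by simpa using congrArg (· ≫ f) hψe⟩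

/-- A lift `f` of `ψb` along `ψa` satisfies `u ≫ f ≫ u = u`, so `f ≫ u` is idempotent. -/
lemma exists_postcomp_bijective (hidem : IdempotentsSplitIn P) {Xa Xb X' : C} (ha : Xa ∈ P)
    (hb : Xb ∈ P) {ψa : Xa ⟶ X'} {u : Xa ⟶ Xb} {ψb : Xb ⟶ X'} (hc : u ≫ ψb = ψa)
    (hsurj : PostcompSurjOn P ψa) (hk : PostcompKillsOn P ψa u) :
    ∃ Y ∈ P, ∃ ε : Y ⟶ X', ∀ A ∈ P, Function.Bijective fun f : A ⟶ Y => f ≫ ε := by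
  obtain ⟨f, hf⟩ := hsurj hb ψb
  have hufu : u ≫ f ≫ u = u := by
    have := hk ha (u ≫ f - 𝟙 Xa) (by simp [Preadditive.sub_comp, hf, hc])
    simpa [Preadditive.sub_comp, sub_eq_zero] using this
  refine exists_postcomp_bijective_of_idempotent hidem hb (hsurj.of_fac hc) (e := f ≫ u)
    (by simp only [Category.assoc, hufu]) (by simp [hc, hf]) fun A hA g hg => ?_
  rw [← Category.assoc]
  exact hk hA _ (by rw [Category.assoc, hf, hg])

lemma exists_precomp_bijective (hidem : IdempotentsSplitIn P) {X' Xa Xb : C} (ha : Xa ∈ P)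
    (hb : Xb ∈ P) {ψa : X' ⟶ Xa} {u : Xb ⟶ Xa} {ψb : X' ⟶ Xb} (hc : ψb ≫ u = ψa)
    (hsurj : PrecompSurjOn P ψa) (hk : PrecompKillsOn P ψa u) :
    ∃ Y ∈ P, ∃ η : X' ⟶ Y, ∀ A ∈ P, Function.Bijective fun f : Y ⟶ A => η ≫ f := by
  obtain ⟨f, hf⟩ := hsurj hb ψb
  have hufu : u ≫ f ≫ u = u := by
    have := hk ha (f ≫ u - 𝟙 Xa) (by simp [Preadditive.comp_sub, reassoc_of% hf, hc])
    simpa [Preadditive.comp_sub, sub_eq_zero] using this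
  refine exists_precomp_bijective_of_idempotent hidem hb (hsurj.of_fac hc) (e := u ≫ f)
    (by simp [reassoc_of% hufu]) (by simp [reassoc_of% hc, hf]) fun A hA g hg => ?_
  rw [Category.assoc]
  exact hk hA _ (by rw [← Category.assoc, hf, hg])

end Approximations

section Adjoints

variable {C : Type*} [Category C] {D : Type*} [Category D]

lemma Functor.isLeftAdjoint_of_bijective {F : D ⥤ C}
    (h : ∀ X : C, ∃ (Y : D) (ε : F.obj Y ⟶ X), ∀ A : D, Function.Bijective
      fun t : A ⟶ Y => F.map t ≫ ε) : F.IsLeftAdjoint := by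
  choose R ε hε using h
  let e : ∀ A X, (F.obj A ⟶ X) ≃ (A ⟶ R X) := fun A X => (Equiv.ofBijective _ (hε X A)).symm
  refine (Adjunction.adjunctionOfEquivRight e fun A' A X f g => ?_).isLeftAdjoint
  rw [Equiv.symm_apply_eq, Equiv.ofBijective_apply, Functor.map_comp, Category.assoc]
  exact congrArg (F.map f ≫ ·) (Equiv.ofBijective_apply_symm_apply _ (hε X A) g).symm

lemma Functor.isRightAdjoint_of_bijective {F : D ⥤ C}
    (h : ∀ X : C, ∃ (Y : D) (η : X ⟶ F.obj Y), ∀ A : D, Function.Bijective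
      fun t : Y ⟶ A => η ≫ F.map t) : F.IsRightAdjoint := by
  choose L η hη using h
  let e : ∀ X A, (L X ⟶ A) ≃ (X ⟶ F.obj A) := fun X A => Equiv.ofBijective _ (hη X A)
  refine (Adjunction.adjunctionOfEquivLeft e fun X A A' g h => ?_).isRightAdjoint
  simp [e]

end Adjoints

section ShiftStable

variable {C : Type u} [Category.{v} C] [HasShift C ℤ]

def IsShiftStable (S : Set C) : Prop := ∀ X ∈ S, ∀ n : ℤ, X⟦n⟧ ∈ S

end ShiftStable

section Triangulated

variable {C : Type u} [Category.{v} C] [HasZeroObject C] [Preadditive C]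
  [HasShift C ℤ] [∀ n : ℤ, (shiftFunctor C n).Additive] [Pretriangulated C]

lemma isShiftStable_starProd {S₁ S₂ : Set C} (h₁ : IsShiftStable S₁) (h₂ : IsShiftStable S₂) :
    IsShiftStable (starProd S₁ S₂) := by
  rintro X ⟨Y₁, Y₂, hY₁, hY₂, f, g, h, hT⟩ n
  exact ⟨_, _, h₁ _ hY₁ n, h₂ _ hY₂ n, _, _, _, Triangle.shift_distinguished _ hT n⟩

structure IsThick (P : Set C) : Prop where
  shift : IsShiftStable P
  ext : ∀ T ∈ distTriang C, T.obj₁ ∈ P → T.obj₃ ∈ P → T.obj₂ ∈ P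
  summand : ∀ {X Z : C} (s : X ⟶ Z) (r : Z ⟶ X), s ≫ r = 𝟙 X → Z ∈ P → X ∈ P

lemma IsThick.obj₃_mem {P : Set C} (hP : IsThick P) {T : Triangle C} (hT : T ∈ distTriang C)
    (h₁ : T.obj₁ ∈ P) (h₂ : T.obj₂ ∈ P) : T.obj₃ ∈ P :=
  hP.ext _ (rot_of_distTriang _ hT) h₂ (hP.shift _ h₁ 1)

lemma IsThick.obj₁_mem {P : Set C} (hP : IsThick P) {T : Triangle C} (hT : T ∈ distTriang C)
    (h₂ : T.obj₂ ∈ P) (h₃ : T.obj₃ ∈ P) : T.obj₁ ∈ P :=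
  hP.ext _ (inv_rot_of_distTriang _ hT) (hP.shift _ h₃ (-1)) h₂

variable {S₁ S₂ : Set C}

lemma postcompSurjOn_starProd (hS₂ : IsShiftStable S₂) {X' XA XB : C} {ψA : XA ⟶ X'}
    {ψB : XB ⟶ X'} {u : XA ⟶ XB} (hc : u ≫ ψB = ψA) (hA : PostcompSurjOn S₁ ψA)
    (hk : PostcompKillsOn S₂ ψA u) (hB : PostcompSurjOn S₂ ψB) :
    PostcompSurjOn (starProd S₁ S₂) ψB := by
  rintro A ⟨C₁, C₂, h₁, h₂, a, b, c, hT⟩ g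
  have hT' := inv_rot_of_distTriang _ hT
  obtain ⟨f₁, hf₁⟩ := hA h₁ (a ≫ g)
  obtain ⟨w, hwa, hw⟩ : ∃ w : C₂⟦(-1 : ℤ)⟧ ⟶ C₁, w ≫ a = 0 ∧
      ∀ φ : C₁ ⟶ XB, w ≫ φ = 0 → ∃ f', φ = a ≫ f' :=
    ⟨_, comp_distTriang_mor_zero₁₂ _ hT', fun φ => Triangle.yoneda_exact₂ _ hT' φ⟩
  obtain ⟨f', hf'⟩ := hw (f₁ ≫ u) <| by
    rw [← Category.assoc]
    exact hk (hS₂ _ h₂ (-1)) _ (by rw [Category.assoc, hf₁, reassoc_of% hwa, zero_comp])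
  obtain ⟨g₂, hg₂⟩ : ∃ g₂ : C₂ ⟶ X', g - f' ≫ ψB = b ≫ g₂ := by
    refine Triangle.yoneda_exact₂ _ hT _ ?_
    change a ≫ (g - f' ≫ ψB) = 0
    rw [Preadditive.comp_sub, ← Category.assoc, ← hf', Category.assoc, hc, hf₁, sub_self]
  obtain ⟨f₂, hf₂⟩ := hB h₂ g₂
  refine ⟨f' + b ≫ f₂, ?_⟩
  rw [Preadditive.add_comp, Category.assoc, hf₂, ← hg₂, add_sub_cancel]

lemma postcompKillsOn_starProd (hS₁ : IsShiftStable S₁) {X' XA XB XC : C} {ψA : XA ⟶ X'}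
    {ψB : XB ⟶ X'} {u₁ : XA ⟶ XB} {u₂ : XB ⟶ XC} (hc : u₁ ≫ ψB = ψA)
    (hk₁ : PostcompKillsOn S₁ ψA u₁) (hk₂ : PostcompKillsOn S₂ ψB u₂)
    (hB : PostcompSurjOn S₁ ψB) : PostcompKillsOn (starProd S₁ S₂) ψA (u₁ ≫ u₂) := by
  rintro A ⟨C₁, C₂, h₁, h₂, a, b, c, hT⟩ f hf
  have hbc : b ≫ c = 0 := comp_distTriang_mor_zero₂₃ _ hT
  obtain ⟨t, ht⟩ : ∃ t : C₂ ⟶ XB, f ≫ u₁ = b ≫ t := by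
    refine Triangle.yoneda_exact₂ _ hT _ ?_
    change a ≫ f ≫ u₁ = 0
    rw [← Category.assoc]
    exact hk₁ h₁ _ (by rw [Category.assoc, hf, comp_zero])
  obtain ⟨g', hg'⟩ : ∃ g' : C₁⟦(1 : ℤ)⟧ ⟶ X', t ≫ ψB = c ≫ g' := by
    refine Triangle.yoneda_exact₃ _ hT _ ?_
    change b ≫ t ≫ ψB = 0
    rw [← Category.assoc, ← ht, Category.assoc, hc, hf]
  obtain ⟨h, hh⟩ := hB (hS₁ _ h₁ 1) g'
  have htu : t ≫ u₂ = c ≫ h ≫ u₂ := by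
    rw [← sub_eq_zero, ← Category.assoc c, ← Preadditive.sub_comp]
    exact hk₂ h₂ _ (by rw [Preadditive.sub_comp, Category.assoc, hh, ← hg', sub_self])
  rw [← Category.assoc, ht, Category.assoc, htu, reassoc_of% hbc, zero_comp]

lemma precompSurjOn_starProd (hS₁ : IsShiftStable S₁) {X' XA XB : C} {ψA : X' ⟶ XA}
    {ψB : X' ⟶ XB} {u : XB ⟶ XA} (hc : ψB ≫ u = ψA) (hA : PrecompSurjOn S₂ ψA)
    (hk : PrecompKillsOn S₁ ψA u) (hB : PrecompSurjOn S₁ ψB) :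
    PrecompSurjOn (starProd S₁ S₂) ψB := by
  rintro A ⟨C₁, C₂, h₁, h₂, a, b, c, hT⟩ g
  have hbc : b ≫ c = 0 := comp_distTriang_mor_zero₂₃ _ hT
  obtain ⟨f₁, hf₁⟩ := hA h₂ (g ≫ b)
  obtain ⟨f', hf'⟩ : ∃ f' : XB ⟶ A, u ≫ f₁ = f' ≫ b := by
    refine Triangle.coyoneda_exact₃ _ hT _ ?_
    change (u ≫ f₁) ≫ c = 0
    rw [Category.assoc]
    exact hk (hS₁ _ h₁ 1) _ (by rw [← Category.assoc, hf₁, Category.assoc, hbc, comp_zero])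
  obtain ⟨g₁, hg₁⟩ : ∃ g₁ : X' ⟶ C₁, g - ψB ≫ f' = g₁ ≫ a := by
    refine Triangle.coyoneda_exact₂ _ hT _ ?_
    change (g - ψB ≫ f') ≫ b = 0
    rw [Preadditive.sub_comp, Category.assoc, ← hf', ← Category.assoc, hc, hf₁, sub_self]
  obtain ⟨f₂, hf₂⟩ := hB h₁ g₁
  refine ⟨f' + f₂ ≫ a, ?_⟩
  rw [Preadditive.comp_add, ← Category.assoc, hf₂, ← hg₁, add_sub_cancel]

lemma precompKillsOn_starProd (hS₂ : IsShiftStable S₂) {X' XA XB XC : C} {ψA : X' ⟶ XA}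
    {ψB : X' ⟶ XB} {u₁ : XB ⟶ XA} {u₂ : XC ⟶ XB} (hc : ψB ≫ u₁ = ψA)
    (hk₁ : PrecompKillsOn S₂ ψA u₁) (hk₂ : PrecompKillsOn S₁ ψB u₂)
    (hB : PrecompSurjOn S₂ ψB) : PrecompKillsOn (starProd S₁ S₂) ψA (u₂ ≫ u₁) := by
  rintro A ⟨C₁, C₂, h₁, h₂, a, b, c, hT⟩ f hf
  have hT' := inv_rot_of_distTriang _ hT
  obtain ⟨w, hwa, hw⟩ : ∃ w : C₂⟦(-1 : ℤ)⟧ ⟶ C₁, w ≫ a = 0 ∧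
      ∀ φ : X' ⟶ C₁, φ ≫ a = 0 → ∃ g', φ = g' ≫ w :=
    ⟨_, comp_distTriang_mor_zero₁₂ _ hT', fun φ => Triangle.coyoneda_exact₂ _ hT' φ⟩
  obtain ⟨t, ht⟩ : ∃ t : XB ⟶ C₁, u₁ ≫ f = t ≫ a := by
    refine Triangle.coyoneda_exact₂ _ hT _ ?_
    change (u₁ ≫ f) ≫ b = 0
    rw [Category.assoc]
    exact hk₁ h₂ _ (by rw [← Category.assoc, hf, zero_comp])
  obtain ⟨g', hg'⟩ := hw (ψB ≫ t) (by rw [Category.assoc, ← ht, ← Category.assoc, hc, hf])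
  obtain ⟨h, hh⟩ := hB (hS₂ _ h₂ (-1)) g'
  have htu : u₂ ≫ t = (u₂ ≫ h) ≫ w := by
    rw [← sub_eq_zero, Category.assoc, ← Preadditive.comp_sub]
    exact hk₂ h₁ _ (by rw [Preadditive.comp_sub, ← Category.assoc, hh, ← hg', sub_self])
  rw [Category.assoc, ht, ← Category.assoc, htu, Category.assoc, hwa, comp_zero]

end Triangulated

section EnvelopeClosure

variable {C : Type u} [Category.{v} C] [Preadditive C] [HasShift C ℤ] [HasBinaryBiproducts C]

lemma isShiftStable_envelope (S : Set C) : IsShiftStable {X | envelope S X} :=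
  fun _ hX n => envelope.shift n hX

variable [∀ n : ℤ, (shiftFunctor C n).Additive]

/-- Proving `Q` for all shifts at once is what makes the `shift` case go through for a `Q`
that is not itself stable under shifts. -/
lemma envelope.induction_on_shifts {S : Set C} {Q : C → Prop}
    (sum : ∀ {X Y : C}, Q X → Q Y → Q (X ⊞ Y))
    (summand : ∀ {X Z : C} (s : X ⟶ Z) (r : Z ⟶ X), s ≫ r = 𝟙 X → Q Z → Q X)
    (shift_mem : ∀ X ∈ S, ∀ n : ℤ, Q (X⟦n⟧)) {X : C} (hX : envelope S X) : Q X := by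
  have of_iso : ∀ {X Y : C}, (X ≅ Y) → Q X → Q Y := fun e => summand e.inv e.hom e.inv_hom_id
  have all_shifts : ∀ {X : C}, envelope S X → ∀ n : ℤ, Q (X⟦n⟧) := by
    intro X hX
    induction hX with
    | of h => exact shift_mem _ h
    | shift m _ ih => exact fun n => of_iso ((shiftFunctorAdd C m n).app _) (ih (m + n))
    | @sum A B _ _ ihA ihB =>
        intro n
        have := preservesBinaryBiproducts_of_preservesBiproducts (shiftFunctor C n)
        exact of_iso ((shiftFunctor C n).mapBiprod A B).symm (sum (ihA n) (ihB n))
    | summand s r hsr _ ih =>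
        intro n
        exact summand (s⟦n⟧') (r⟦n⟧') (by simp [← Functor.map_comp, hsr]) (ih n)
  exact of_iso ((shiftFunctorZero C ℤ).app X) (all_shifts hX 0)

variable {S : Set C}

lemma postcompSurjOn_envelope {X X' : C} {ψ : X ⟶ X'}
    (h : ∀ A ∈ S, ∀ n : ℤ, ∀ g : A⟦n⟧ ⟶ X', ∃ f, f ≫ ψ = g) :
    PostcompSurjOn {B | envelope S B} ψ := by
  intro A hA
  refine envelope.induction_on_shifts (Q := fun B => ∀ g : B ⟶ X', ∃ f, f ≫ ψ = g)
    (fun h₁ h₂ => ?_) (fun s r hsr hZ => ?_) h hA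
  · intro g
    obtain ⟨f₁, hf₁⟩ := h₁ (biprod.inl ≫ g)
    obtain ⟨f₂, hf₂⟩ := h₂ (biprod.inr ≫ g)
    exact ⟨biprod.desc f₁ f₂, by ext <;> simp [hf₁, hf₂]⟩
  · intro g
    obtain ⟨f, hf⟩ := hZ (r ≫ g)
    exact ⟨s ≫ f, by rw [Category.assoc, hf, reassoc_of% hsr]⟩

lemma postcompKillsOn_envelope {X X' X₂ : C} {ψ : X ⟶ X'} {u : X ⟶ X₂}
    (h : ∀ A ∈ S, ∀ n : ℤ, ∀ f : A⟦n⟧ ⟶ X, f ≫ ψ = 0 → f ≫ u = 0) :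
    PostcompKillsOn {B | envelope S B} ψ u := by
  intro A hA
  refine envelope.induction_on_shifts (Q := fun B => ∀ f : B ⟶ X, f ≫ ψ = 0 → f ≫ u = 0)
    (fun h₁ h₂ => ?_) (fun s r hsr hZ => ?_) h hA
  · intro f hf
    ext
    · simpa using h₁ (biprod.inl ≫ f) (by simp [hf])
    · simpa using h₂ (biprod.inr ≫ f) (by simp [hf])
  · intro f hf
    rw [← Category.id_comp f, ← hsr, Category.assoc, Category.assoc, ← Category.assoc r,
      hZ (r ≫ f) (by simp [hf]), comp_zero]

lemma precompSurjOn_envelope {X' X : C} {ψ : X' ⟶ X}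
    (h : ∀ A ∈ S, ∀ n : ℤ, ∀ g : X' ⟶ A⟦n⟧, ∃ f, ψ ≫ f = g) :
    PrecompSurjOn {B | envelope S B} ψ := by
  intro A hA
  refine envelope.induction_on_shifts (Q := fun B => ∀ g : X' ⟶ B, ∃ f, ψ ≫ f = g)
    (fun h₁ h₂ => ?_) (fun s r hsr hZ => ?_) h hA
  · intro g
    obtain ⟨f₁, hf₁⟩ := h₁ (g ≫ biprod.fst)
    obtain ⟨f₂, hf₂⟩ := h₂ (g ≫ biprod.snd)
    exact ⟨biprod.lift f₁ f₂, by ext <;> simp [hf₁, hf₂]⟩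
  · intro g
    obtain ⟨f, hf⟩ := hZ (g ≫ s)
    exact ⟨f ≫ r, by rw [← Category.assoc, hf, Category.assoc, hsr, Category.comp_id]⟩

lemma precompKillsOn_envelope {X' X X₂ : C} {ψ : X' ⟶ X} {u : X₂ ⟶ X}
    (h : ∀ A ∈ S, ∀ n : ℤ, ∀ f : X ⟶ A⟦n⟧, ψ ≫ f = 0 → u ≫ f = 0) :
    PrecompKillsOn {B | envelope S B} ψ u := by
  intro A hA
  refine envelope.induction_on_shifts (Q := fun B => ∀ f : X ⟶ B, ψ ≫ f = 0 → u ≫ f = 0)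
    (fun h₁ h₂ => ?_) (fun s r hsr hZ => ?_) h hA
  · intro f hf
    ext
    · simpa using h₁ (f ≫ biprod.fst) (by simp [reassoc_of% hf])
    · simpa using h₂ (f ≫ biprod.snd) (by simp [reassoc_of% hf])
  · intro f hf
    rw [← Category.comp_id f, ← hsr, ← Category.assoc, ← Category.assoc, Category.assoc u,
      hZ (f ≫ s) (by simp [reassoc_of% hf]), zero_comp]

end EnvelopeClosure

section Generation

open ZeroObject

variable {C : Type u} [Category.{v} C] [HasZeroObject C] [Preadditive C]
  [HasShift C ℤ] [HasBinaryBiproducts C]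

lemma zero_mem_envelope (G : C) : envelope {G} 0 :=
  envelope.summand (0 : 0 ⟶ G) 0 (by simp) (envelope.of rfl)

variable [∀ n : ℤ, (shiftFunctor C n).Additive] [Pretriangulated C]

lemma isShiftStable_genIdx (G : C) : ∀ d : ℕ, IsShiftStable (genIdx G d)
  | 0 => isShiftStable_envelope _
  | _ + 1 => isShiftStable_envelope _

lemma monotone_genIdx (G : C) : Monotone (genIdx G) :=
  monotone_nat_of_le_succ fun _ X hX =>
    envelope.of ⟨X, 0, hX, zero_mem_envelope G, 𝟙 X, 0, 0, contractible_distinguished X⟩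

lemma envelope_subset_genIdx (G : C) (d : ℕ) : {X | envelope {G} X} ⊆ genIdx G d :=
  monotone_genIdx G (Nat.zero_le d)

lemma IsThick.envelope_subset {P : Set C} (hP : IsThick P) {S : Set C} (hS : S ⊆ P) :
    {X | envelope S X} ⊆ P := by
  intro X hX
  induction hX with
  | of h => exact hS h
  | shift n _ ih => exact hP.shift _ ih n
  | sum _ _ ihX ihY => exact hP.ext _ (binaryBiproductTriangle_distinguished _ _) ihX ihY
  | summand s r hsr _ ih => exact hP.summand s r hsr ih

variable {S₁ S₂ : Set C}

lemma PostcompSurjOn.diamond (hS₁ : IsShiftStable S₁) (hS₂ : IsShiftStable S₂) {X' XA XB : C}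
    {ψA : XA ⟶ X'} {ψB : XB ⟶ X'} {u : XA ⟶ XB} (hc : u ≫ ψB = ψA) (hA : PostcompSurjOn S₁ ψA)
    (hk : PostcompKillsOn S₂ ψA u) (hB : PostcompSurjOn S₂ ψB) :
    PostcompSurjOn (diamond S₁ S₂) ψB :=
  postcompSurjOn_envelope fun _ hA' n =>
    postcompSurjOn_starProd hS₂ hc hA hk hB (isShiftStable_starProd hS₁ hS₂ _ hA' n)

lemma PostcompKillsOn.diamond (hS₁ : IsShiftStable S₁) (hS₂ : IsShiftStable S₂)
    {X' XA XB XC : C} {ψA : XA ⟶ X'} {ψB : XB ⟶ X'} {u₁ : XA ⟶ XB} {u₂ : XB ⟶ XC}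
    (hc : u₁ ≫ ψB = ψA) (hk₁ : PostcompKillsOn S₁ ψA u₁) (hk₂ : PostcompKillsOn S₂ ψB u₂)
    (hB : PostcompSurjOn S₁ ψB) : PostcompKillsOn (diamond S₁ S₂) ψA (u₁ ≫ u₂) :=
  postcompKillsOn_envelope fun _ hA' n =>
    postcompKillsOn_starProd hS₁ hc hk₁ hk₂ hB (isShiftStable_starProd hS₁ hS₂ _ hA' n)

lemma PrecompSurjOn.diamond (hS₁ : IsShiftStable S₁) (hS₂ : IsShiftStable S₂) {X' XA XB : C}
    {ψA : X' ⟶ XA} {ψB : X' ⟶ XB} {u : XB ⟶ XA} (hc : ψB ≫ u = ψA) (hA : PrecompSurjOn S₂ ψA)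
    (hk : PrecompKillsOn S₁ ψA u) (hB : PrecompSurjOn S₁ ψB) :
    PrecompSurjOn (diamond S₁ S₂) ψB :=
  precompSurjOn_envelope fun _ hA' n =>
    precompSurjOn_starProd hS₁ hc hA hk hB (isShiftStable_starProd hS₁ hS₂ _ hA' n)

lemma PrecompKillsOn.diamond (hS₁ : IsShiftStable S₁) (hS₂ : IsShiftStable S₂)
    {X' XA XB XC : C} {ψA : X' ⟶ XA} {ψB : X' ⟶ XB} {u₁ : XB ⟶ XA} {u₂ : XC ⟶ XB}
    (hc : ψB ≫ u₁ = ψA) (hk₁ : PrecompKillsOn S₂ ψA u₁) (hk₂ : PrecompKillsOn S₁ ψB u₂)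
    (hB : PrecompSurjOn S₂ ψB) : PrecompKillsOn (diamond S₁ S₂) ψA (u₂ ≫ u₁) :=
  precompKillsOn_envelope fun _ hA' n =>
    precompKillsOn_starProd hS₂ hc hk₁ hk₂ hB (isShiftStable_starProd hS₁ hS₂ _ hA' n)

end Generation

lemma DirectSum.finite_setOf_exists_ne_zero (R : Type*) [Semiring R] {ι : Type*}
    {M : ι → Type*} [∀ i, AddCommMonoid (M i)] [∀ i, Module R (M i)]
    [Module.Finite R (⨁ i, M i)] : {i | ∃ x : M i, x ≠ 0}.Finite := by
  classical
  obtain ⟨S, hS⟩ := Module.Finite.fg_top (R := R) (M := ⨁ i, M i)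
  refine (S.sup fun v => v.support).finite_toSet.subset ?_
  rintro i ⟨x, hx⟩
  by_contra hi
  have hvanish : ∀ v ∈ Submodule.span R (S : Set (⨁ i, M i)), v i = 0 := by
    intro v hv
    induction hv using Submodule.span_induction with
    | mem y hy => exact DFinsupp.notMem_support_iff.1 fun h => hi (Finset.mem_sup.2 ⟨y, hy, h⟩)
    | zero => rfl
    | add a b _ _ ha hb => rw [DirectSum.add_apply, ha, hb, add_zero]
    | smul c a _ ha => rw [DirectSum.smul_apply, ha, smul_zero]
  exact hx (by simpa using hvanish (lof R ι M i x) (hS ▸ trivial))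

lemma Module.Finite.of_directSum (R : Type*) [Semiring R] {ι : Type*} [DecidableEq ι]
    {M : ι → Type*} [∀ i, AddCommMonoid (M i)] [∀ i, Module R (M i)]
    [Module.Finite R (⨁ i, M i)] (i : ι) : Module.Finite R (M i) :=
  Module.Finite.of_surjective (component R ι M i) fun x =>
    ⟨lof R ι M i x, component.lof_self R i x⟩

section Proper

variable (k : Type w) [Field k] {C : Type u} [Category.{v} C] [Preadditive C] [Linear k C]
  [HasShift C ℤ] (hproper : ∀ X Y : C, FiniteDimensional k (⨁ m : ℤ, (X ⟶ Y⟦m⟧)))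
include hproper

lemma finiteDimensional_hom_shift (Z G : C) (m : ℤ) :
    FiniteDimensional k (Z ⟶ G⟦m⟧) :=
  have := hproper Z G
  Module.Finite.of_directSum k (M := fun m : ℤ => Z ⟶ G⟦m⟧) m

lemma finite_setOf_hom_shift_ne_zero (Z G : C) :
    {m : ℤ | ∃ f : Z ⟶ G⟦m⟧, f ≠ 0}.Finite :=
  have := hproper Z G
  DirectSum.finite_setOf_exists_ne_zero k

lemma finiteDimensional_shift_hom (G Z : C) (m : ℤ) :
    FiniteDimensional k (G⟦m⟧ ⟶ Z) :=
  have := finiteDimensional_hom_shift k hproper (G⟦m⟧) Z 0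
  Module.Finite.equiv (Linear.homCongr k (Iso.refl _) ((shiftFunctorZero C ℤ).app Z))

lemma finite_setOf_shift_hom_ne_zero [∀ n : ℤ, (shiftFunctor C n).Additive] (G Z : C) :
    {m : ℤ | ∃ f : G⟦m⟧ ⟶ Z, f ≠ 0}.Finite := by
  refine ((finite_setOf_hom_shift_ne_zero k hproper G Z).image Neg.neg).subset ?_
  rintro m ⟨f, hf⟩
  refine ⟨-m, ⟨((shiftFunctorCompIsoId C m (-m) (add_neg_cancel m)).app G).inv ≫ f⟦-m⟧', ?_⟩,
    neg_neg m⟩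
  rwa [Ne, Preadditive.IsIso.comp_left_eq_zero, Functor.map_eq_zero_iff]

end Proper

section EnvelopeApproximation

variable {C : Type u} [Category.{v} C] [Preadditive C] [HasShift C ℤ] [HasBinaryBiproducts C]

lemma exists_envelope_hom_to_of_finset (G Z : C) (s : Finset (Σ m : ℤ, G⟦m⟧ ⟶ Z)) :
    ∃ Y, envelope {G} Y ∧ ∃ α : Y ⟶ Z, (∀ e ∈ s, ∃ β, β ≫ α = e.2) ∧
      ∀ ⦃W : C⦄ (ψ : Z ⟶ W), (∀ e ∈ s, e.2 ≫ ψ = 0) → α ≫ ψ = 0 := by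
  classical
  induction s using Finset.induction_on with
  | empty => exact ⟨G, .of rfl, 0, by simp, fun _ _ _ => zero_comp⟩
  | insert e s _ ih =>
    obtain ⟨Y, hY, α, hfac, hkill⟩ := ih
    refine ⟨G⟦e.1⟧ ⊞ Y, .sum (.shift _ (.of rfl)) hY, biprod.desc e.2 α, ?_, fun W ψ hψ => ?_⟩
    · refine Finset.forall_mem_insert _ _ _ |>.2 ⟨⟨biprod.inl, biprod.inl_desc _ _⟩, ?_⟩
      intro e' he'
      obtain ⟨β, hβ⟩ := hfac e' he'
      exact ⟨β ≫ biprod.inr, by simp [hβ]⟩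
    · rw [Finset.forall_mem_insert] at hψ
      ext <;> simp [hψ.1, hkill ψ hψ.2]

lemma exists_envelope_hom_from_of_finset (G Z : C) (s : Finset (Σ m : ℤ, Z ⟶ G⟦m⟧)) :
    ∃ Y, envelope {G} Y ∧ ∃ α : Z ⟶ Y, (∀ e ∈ s, ∃ β, α ≫ β = e.2) ∧
      ∀ ⦃W : C⦄ (ψ : W ⟶ Z), (∀ e ∈ s, ψ ≫ e.2 = 0) → ψ ≫ α = 0 := by
  classical
  induction s using Finset.induction_on with
  | empty => exact ⟨G, .of rfl, 0, by simp, fun _ _ _ => comp_zero⟩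
  | insert e s _ ih =>
    obtain ⟨Y, hY, α, hfac, hkill⟩ := ih
    refine ⟨G⟦e.1⟧ ⊞ Y, .sum (.shift _ (.of rfl)) hY, biprod.lift e.2 α, ?_, fun W ψ hψ => ?_⟩
    · refine Finset.forall_mem_insert _ _ _ |>.2 ⟨⟨biprod.fst, biprod.lift_fst _ _⟩, ?_⟩
      intro e' he'
      obtain ⟨β, hβ⟩ := hfac e' he'
      exact ⟨biprod.snd ≫ β, by simp [hβ]⟩
    · rw [Finset.forall_mem_insert] at hψ
      ext <;> simp [hψ.1, hkill ψ hψ.2]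

variable (k : Type w) [Field k] [Linear k C]
  (hproper : ∀ X Y : C, FiniteDimensional k (⨁ m : ℤ, (X ⟶ Y⟦m⟧)))
include hproper

/-- Properness leaves only finitely many nonzero `V m`, each finite-dimensional, so finitely
many morphisms span all of them. -/
lemma exists_envelope_hom_from_factoring (G Z : C) (V : ∀ m : ℤ, Submodule k (Z ⟶ G⟦m⟧)) :
    ∃ Y, envelope {G} Y ∧ ∃ α : Z ⟶ Y, (∀ m, ∀ f ∈ V m, ∃ β, α ≫ β = f) ∧
      ∀ ⦃W : C⦄ (ψ : W ⟶ Z), (∀ m, ∀ f ∈ V m, ψ ≫ f = 0) → ψ ≫ α = 0 := by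
  classical
  have := finiteDimensional_hom_shift k hproper Z G
  have hV : {m | V m ≠ ⊥}.Finite := (finite_setOf_hom_shift_ne_zero k hproper Z G).subset
    fun m hm => (Submodule.exists_mem_ne_zero_of_ne_bot hm).imp fun _ h => h.2
  choose t ht using fun m => IsNoetherian.noetherian (V m)
  obtain ⟨Y, hY, α, hfac, hkill⟩ := exists_envelope_hom_from_of_finset G Z (hV.toFinset.sigma t)
  refine ⟨Y, hY, α, fun m => ?_, fun W ψ hψ => hkill ψ ?_⟩
  · suffices V m ≤ LinearMap.range (Linear.leftComp k _ α) from fun f hf => this hf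
    by_cases hm : V m = ⊥
    · simp [hm]
    rw [← ht m, Submodule.span_le]
    exact fun g hg => hfac ⟨m, g⟩ (Finset.mem_sigma.2 ⟨hV.mem_toFinset.2 hm, hg⟩)
  · rintro ⟨m, g⟩ he
    exact hψ m g (ht m ▸ Submodule.subset_span (Finset.mem_sigma.1 he).2)

variable [∀ n : ℤ, (shiftFunctor C n).Additive]

lemma exists_envelope_hom_to_factoring (G Z : C) (V : ∀ m : ℤ, Submodule k (G⟦m⟧ ⟶ Z)) :
    ∃ Y, envelope {G} Y ∧ ∃ α : Y ⟶ Z, (∀ m, ∀ f ∈ V m, ∃ β, β ≫ α = f) ∧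
      ∀ ⦃W : C⦄ (ψ : Z ⟶ W), (∀ m, ∀ f ∈ V m, f ≫ ψ = 0) → α ≫ ψ = 0 := by
  classical
  have := finiteDimensional_shift_hom k hproper G Z
  have hV : {m | V m ≠ ⊥}.Finite := (finite_setOf_shift_hom_ne_zero k hproper G Z).subset
    fun m hm => (Submodule.exists_mem_ne_zero_of_ne_bot hm).imp fun _ h => h.2
  choose t ht using fun m => IsNoetherian.noetherian (V m)
  obtain ⟨Y, hY, α, hfac, hkill⟩ := exists_envelope_hom_to_of_finset G Z (hV.toFinset.sigma t)
  refine ⟨Y, hY, α, fun m => ?_, fun W ψ hψ => hkill ψ ?_⟩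
  · suffices V m ≤ LinearMap.range (Linear.rightComp k _ α) from fun f hf => this hf
    by_cases hm : V m = ⊥
    · simp [hm]
    rw [← ht m, Submodule.span_le]
    exact fun g hg => hfac ⟨m, g⟩ (Finset.mem_sigma.2 ⟨hV.mem_toFinset.2 hm, hg⟩)
  · rintro ⟨m, g⟩ he
    exact hψ m g (ht m ▸ Submodule.subset_span (Finset.mem_sigma.1 he).2)

lemma exists_postcompSurjOn_envelope (G X' : C) :
    ∃ Y, envelope {G} Y ∧ ∃ α : Y ⟶ X', PostcompSurjOn {B | envelope {G} B} α := by
  obtain ⟨Y, hY, α, hfac, -⟩ := exists_envelope_hom_to_factoring k hproper G X' fun _ => ⊤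
  exact ⟨Y, hY, α, postcompSurjOn_envelope <| by rintro _ rfl m g; exact hfac m g trivial⟩

lemma exists_precompSurjOn_envelope (G X' : C) :
    ∃ Y, envelope {G} Y ∧ ∃ α : X' ⟶ Y, PrecompSurjOn {B | envelope {G} B} α := by
  obtain ⟨Y, hY, α, hfac, -⟩ := exists_envelope_hom_from_factoring k hproper G X' fun _ => ⊤
  exact ⟨Y, hY, α, precompSurjOn_envelope <| by rintro _ rfl m g; exact hfac m g trivial⟩

end EnvelopeApproximation

section Coreflection

variable (k : Type w) [Field k] {C : Type u} [Category.{v} C] [HasZeroObject C] [Preadditive C]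
  [Linear k C] [HasShift C ℤ] [∀ n : ℤ, (shiftFunctor C n).Additive] [Pretriangulated C]
  [HasBinaryBiproducts C] {P : Set C} {G : C} (hP : IsThick P) (hG : G ∈ P)
  (hproper : ∀ X Y : C, FiniteDimensional k (⨁ m : ℤ, (X ⟶ Y⟦m⟧)))
include hP hG hproper

/-- `u` is the cone of a map `α` from the envelope of `G` through which the kernel of
`(· ≫ ψ)` on shifts of `G` factors. -/
lemma exists_postcompKillsOn_envelope {X X' : C} (hX : X ∈ P) (ψ : X ⟶ X') :
    ∃ X₂ ∈ P, ∃ (u : X ⟶ X₂) (ψ₂ : X₂ ⟶ X'),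
      u ≫ ψ₂ = ψ ∧ PostcompKillsOn {B | envelope {G} B} ψ u := by
  obtain ⟨Y, hY, α, hfac, hkill⟩ := exists_envelope_hom_to_factoring k hproper G X
    fun _ => LinearMap.ker (Linear.rightComp k _ ψ)
  obtain ⟨X₂, u, w, hT⟩ := distinguished_cocone_triangle α
  obtain ⟨ψ₂, hψ₂⟩ := Triangle.yoneda_exact₂ _ hT ψ (hkill ψ fun _ _ hf => hf)
  have hYP : Y ∈ P := hP.envelope_subset (Set.singleton_subset_iff.2 hG) hY
  refine ⟨X₂, hP.obj₃_mem hT hYP hX, u, ψ₂, hψ₂.symm, postcompKillsOn_envelope ?_⟩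
  have hαu : α ≫ u = 0 := comp_distTriang_mor_zero₁₂ _ hT
  rintro _ rfl m f hf
  obtain ⟨β, rfl⟩ := hfac m f hf
  rw [Category.assoc, hαu, comp_zero]

lemma exists_precompKillsOn_envelope {X' X : C} (hX : X ∈ P) (ψ : X' ⟶ X) :
    ∃ X₂ ∈ P, ∃ (u : X₂ ⟶ X) (ψ₂ : X' ⟶ X₂),
      ψ₂ ≫ u = ψ ∧ PrecompKillsOn {B | envelope {G} B} ψ u := by
  obtain ⟨Y, hY, α, hfac, hkill⟩ := exists_envelope_hom_from_factoring k hproper G X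
    fun _ => LinearMap.ker (Linear.leftComp k _ ψ)
  obtain ⟨X₂, u, w, hT⟩ := distinguished_cocone_triangle₁ α
  obtain ⟨ψ₂, hψ₂⟩ := Triangle.coyoneda_exact₂ _ hT ψ (hkill ψ fun _ _ hf => hf)
  have hYP : Y ∈ P := hP.envelope_subset (Set.singleton_subset_iff.2 hG) hY
  refine ⟨X₂, hP.obj₁_mem hT hX hYP, u, ψ₂, hψ₂.symm, precompKillsOn_envelope ?_⟩
  have huα : u ≫ α = 0 := comp_distTriang_mor_zero₁₂ _ hT
  rintro _ rfl m f hf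
  obtain ⟨β, rfl⟩ := hfac m f hf
  rw [← Category.assoc, huα, zero_comp]

lemma exists_postcompKillsOn_genIdx (d : ℕ) {X X' : C} (hX : X ∈ P) (ψ : X ⟶ X')
    (hψ : PostcompSurjOn (genIdx G d) ψ) :
    ∃ X₂ ∈ P, ∃ (u : X ⟶ X₂) (ψ₂ : X₂ ⟶ X'), u ≫ ψ₂ = ψ ∧ PostcompKillsOn (genIdx G d) ψ u := by
  induction d with
  | zero => exact exists_postcompKillsOn_envelope k hP hG hproper hX ψ
  | succ d ih =>
    have hψd := hψ.mono (monotone_genIdx G d.le_succ)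
    obtain ⟨X₂, hX₂, u₁, ψ₂, hc₁, hk₁⟩ := ih hψd
    obtain ⟨X₃, hX₃, u₂, ψ₃, hc₂, hk₂⟩ := exists_postcompKillsOn_envelope k hP hG hproper hX₂ ψ₂
    exact ⟨X₃, hX₃, u₁ ≫ u₂, ψ₃, by rw [Category.assoc, hc₂, hc₁],
      .diamond (isShiftStable_genIdx G d) (isShiftStable_envelope _) hc₁ hk₁ hk₂ (hψd.of_fac hc₁)⟩

lemma exists_precompKillsOn_genIdx (d : ℕ) {X' X : C} (hX : X ∈ P) (ψ : X' ⟶ X)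
    (hψ : PrecompSurjOn (genIdx G d) ψ) :
    ∃ X₂ ∈ P, ∃ (u : X₂ ⟶ X) (ψ₂ : X' ⟶ X₂), ψ₂ ≫ u = ψ ∧ PrecompKillsOn (genIdx G d) ψ u := by
  induction d generalizing X ψ with
  | zero => exact exists_precompKillsOn_envelope k hP hG hproper hX ψ
  | succ d ih =>
    have hψd := hψ.mono (monotone_genIdx G d.le_succ)
    obtain ⟨X₂, hX₂, u₁, ψ₂, hc₁, hk₁⟩ := exists_precompKillsOn_envelope k hP hG hproper hX ψ
    obtain ⟨X₃, hX₃, u₂, ψ₃, hc₂, hk₂⟩ := ih hX₂ ψ₂ (hψd.of_fac hc₁)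
    exact ⟨X₃, hX₃, u₂ ≫ u₁, ψ₃, by rw [← Category.assoc, hc₂, hc₁],
      .diamond (isShiftStable_genIdx G d) (isShiftStable_envelope _) hc₁ hk₁ hk₂
        ((hψd.of_fac hc₁).mono (envelope_subset_genIdx G d))⟩

lemma exists_postcompSurjOn_genIdx (d : ℕ) (X' : C) :
    ∃ X ∈ P, ∃ ψ : X ⟶ X', PostcompSurjOn (genIdx G d) ψ := by
  induction d with
  | zero =>
    obtain ⟨Y, hY, α, hα⟩ := exists_postcompSurjOn_envelope k hproper G X'
    exact ⟨Y, hP.envelope_subset (Set.singleton_subset_iff.2 hG) hY, α, hα⟩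
  | succ d ih =>
    obtain ⟨X, hX, ψ, hψ⟩ := ih
    obtain ⟨X₂, hX₂, u, ψ₂, hc, hk⟩ := exists_postcompKillsOn_genIdx k hP hG hproper d hX ψ hψ
    have henv := envelope_subset_genIdx G d
    exact ⟨X₂, hX₂, ψ₂, .diamond (isShiftStable_genIdx G d) (isShiftStable_envelope _) hc hψ
      (hk.mono henv) ((hψ.mono henv).of_fac hc)⟩

lemma exists_precompSurjOn_genIdx (d : ℕ) (X' : C) :
    ∃ X ∈ P, ∃ ψ : X' ⟶ X, PrecompSurjOn (genIdx G d) ψ := by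
  induction d with
  | zero =>
    obtain ⟨Y, hY, α, hα⟩ := exists_precompSurjOn_envelope k hproper G X'
    exact ⟨Y, hP.envelope_subset (Set.singleton_subset_iff.2 hG) hY, α, hα⟩
  | succ d ih =>
    obtain ⟨X, hX, ψ, hψ⟩ := ih
    obtain ⟨X₂, hX₂, u, ψ₂, hc, hk⟩ := exists_precompKillsOn_genIdx k hP hG hproper d hX ψ hψ
    have henv := envelope_subset_genIdx G d
    exact ⟨X₂, hX₂, ψ₂, .diamond (isShiftStable_genIdx G d) (isShiftStable_envelope _) hc
      (hψ.mono henv) hk (hψ.of_fac hc)⟩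

lemma exists_coreflection (hidem : IdempotentsSplitIn P) {n : ℕ} (hn : P ⊆ genIdx G n)
    (X' : C) : ∃ Y ∈ P, ∃ ε : Y ⟶ X', ∀ A ∈ P, Function.Bijective fun f : A ⟶ Y => f ≫ ε := by
  obtain ⟨Xa, ha, ψa, hsurj⟩ := exists_postcompSurjOn_genIdx k hP hG hproper n X'
  obtain ⟨Xb, hb, u, ψb, hc, hk⟩ := exists_postcompKillsOn_genIdx k hP hG hproper n ha ψa hsurj
  exact exists_postcomp_bijective hidem ha hb hc (hsurj.mono hn) (hk.mono hn)

lemma exists_reflection (hidem : IdempotentsSplitIn P) {n : ℕ} (hn : P ⊆ genIdx G n)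
    (X' : C) : ∃ Y ∈ P, ∃ η : X' ⟶ Y, ∀ A ∈ P, Function.Bijective fun f : Y ⟶ A => η ≫ f := by
  obtain ⟨Xa, ha, ψa, hsurj⟩ := exists_precompSurjOn_genIdx k hP hG hproper n X'
  obtain ⟨Xb, hb, u, ψb, hc, hk⟩ := exists_precompKillsOn_genIdx k hP hG hproper n ha ψa hsurj
  exact exists_precomp_bijective hidem ha hb hc (hsurj.mono hn) (hk.mono hn)

end Coreflection

theorem admissible_of_regular_proper_subcategory
    (k : Type w) [Field k]
    (C : Type u) [Category.{v} C] [HasZeroObject C] [Preadditive C] [Linear k C]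
    [HasShift C ℤ] [∀ n : ℤ, (shiftFunctor C n).Additive] [Pretriangulated C]
    [HasBinaryBiproducts C]
    -- `T'` is proper over `k`:
    (hproper : ∀ X Y : C, FiniteDimensional k (⨁ m : ℤ, (X ⟶ Y⟦m⟧)))
    -- `T ⊆ T'` is a strictly full triangulated subcategory:
    (P : Set C)
    (hiso : ∀ {X Y : C}, (X ≅ Y) → X ∈ P → Y ∈ P)
    (hshift : ∀ (X : C) (n : ℤ), X ∈ P → X⟦n⟧ ∈ P)
    (hext : ∀ (T : Triangle C), T ∈ (distTriang C) →
      T.obj₁ ∈ P → T.obj₃ ∈ P → T.obj₂ ∈ P)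
    (hsummand : ∀ {X Z : C} (s : X ⟶ Z) (r : Z ⟶ X),
      s ≫ r = 𝟙 X → Z ∈ P → X ∈ P)
    -- `T` is regular: it has a strong generator
    (hreg : ∃ (G : C) (_ : G ∈ P) (n : ℕ), genIdx G n = P)
    -- `T` is idempotent complete: every idempotent of an object of `T` splits in `T`
    (hidem : ∀ (X : C), X ∈ P → ∀ e : X ⟶ X, e ≫ e = e →
      ∃ (Y : C) (_ : Y ∈ P) (p : X ⟶ Y) (i : Y ⟶ X), i ≫ p = 𝟙 Y ∧ p ≫ i = e) :
    -- then `T` is admissible in `T'`: the inclusion has right and left adjoints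
    (ObjectProperty.ι (· ∈ P : ObjectProperty C)).IsLeftAdjoint ∧
    (ObjectProperty.ι (· ∈ P : ObjectProperty C)).IsRightAdjoint := by
  obtain ⟨G, hG, n, hn⟩ := hreg
  have hP : IsThick P := ⟨fun X hX m => hshift X m hX, hext, hsummand⟩
  have hι := ObjectProperty.fullyFaithfulι (· ∈ P : ObjectProperty C)
  refine ⟨Functor.isLeftAdjoint_of_bijective fun X' => ?_,
    Functor.isRightAdjoint_of_bijective fun X' => ?_⟩
  · obtain ⟨Y, hY, ε, hε⟩ := exists_coreflection k hP hG hproper hidem hn.ge X'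
    exact ⟨⟨Y, hY⟩, ε, fun A => (hε A.obj A.property).comp (hι.map_bijective A _)⟩
  · obtain ⟨Y, hY, η, hη⟩ := exists_reflection k hP hG hproper hidem hn.ge X'
    exact ⟨⟨Y, hY⟩, η, fun A => (hη A.obj A.property).comp (hι.map_bijective _ A)⟩
end
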